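/- Let N be a bounded normal operator in a Krein space and λ a spectral point of two-sided positive type (λ ∈ σ₊(N) and λ̄ ∈ σ₊(N⁺)). Then ker(N - λ) = ker(N⁺ - λ̄). -/

import Mathlib

open Filter Topology ContinuousLinearMap

noncomputable section

variable {H : Type*} [NormedAddCommGroup H] [InnerProductSpace ℂ H] [CompleteSpace H]

def kadj (J T : H →L[ℂ] H) : H →L[ℂ] H := J ∘L (ContinuousLinearMap.adjoint T) ∘L J

def ApproxEig (T : H →L[ℂ] H) (l : ℂ) (x : ℕ → H) : Prop :=
  (∀ n, ‖x n‖ = 1) ∧ Tendsto (fun n => T (x n) - l • x n) atTop (nhds 0)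

def approxSpec (T : H →L[ℂ] H) : Set ℂ := {l | ∃ x : ℕ → H, ApproxEig T l x}

def posType (J T : H →L[ℂ] H) : Set ℂ :=
  {l | l ∈ approxSpec T ∧ ∀ x : ℕ → H, ApproxEig T l x →
      0 < Filter.liminf (fun n => (inner ℂ (J (x n)) (x n) : ℂ).re) Filter.atTop}

/-!
If `N x = λ x`, then `y = N⁺ x - λ̄ x` lies in `ker (N - λ)` because `N` commutes with `N⁺`, and
`[y, z] = [x, (N - λ) z] = 0` for every `z ∈ ker (N - λ)`; in particular `[y, y] = 0`. A normalised
eigenvector is a constant approximate eigensequence, so positive type of `λ` rules out neutral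
eigenvectors, whence `y = 0`. The converse inclusion is the same argument for `N⁺`, using `N⁺⁺ = N`.
-/

omit [CompleteSpace H] in
theorem ApproxEig.const {T : H →L[ℂ] H} {l : ℂ} {y : H} (hy : ‖y‖ = 1) (hTy : T y = l • y) :
    ApproxEig T l (fun _ => y) :=
  ⟨fun _ => hy, by simp [hTy]⟩

omit [CompleteSpace H] in
theorem eq_zero_of_mem_posType_of_inner_self_eq_zero {J T : H →L[ℂ] H} {l : ℂ}
    (hl : l ∈ posType J T) {y : H} (hTy : T y = l • y) (hJy : inner ℂ (J y) y = 0) :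
    y = 0 := by
  by_contra hy
  set u : H := (‖y‖⁻¹ : ℂ) • y
  have hu : ‖u‖ = 1 := by simp [u, norm_smul, hy]
  have hTu : T u = l • u := by rw [map_smul, hTy, smul_comm]
  have hJu : inner ℂ (J u) u = 0 := by simp [u, hJy]
  simpa [hJu] using hl.2 _ (ApproxEig.const hu hTu)

theorem inner_kadj_apply {J : H →L[ℂ] H} (hJ2 : J ∘L J = 1) (T : H →L[ℂ] H) (x z : H) :
    inner ℂ (J (kadj J T x)) z = inner ℂ (J x) (T z) := by
  have hJJ : J (J (adjoint T (J x))) = adjoint T (J x) := DFunLike.congr_fun hJ2 _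
  rw [kadj, comp_apply, comp_apply, hJJ, adjoint_inner_left]

theorem kadj_kadj {J : H →L[ℂ] H} (hJ : adjoint J = J) (hJ2 : J ∘L J = 1) (T : H →L[ℂ] H) :
    kadj J (kadj J T) = T := by
  rw [kadj, kadj, adjoint_comp, adjoint_comp, adjoint_adjoint, hJ, comp_assoc, hJ2, one_def,
    comp_id, ← comp_assoc, hJ2, one_def, id_comp]

theorem kadj_apply_eq_of_mem_posType {J T : H →L[ℂ] H} (hJ2 : J ∘L J = 1)
    (hT : T ∘L kadj J T = kadj J T ∘L T) {l : ℂ} (hl : l ∈ posType J T) {x : H}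
    (hx : T x = l • x) : kadj J T x = starRingEnd ℂ l • x := by
  set y := kadj J T x - starRingEnd ℂ l • x with hy
  have hTy : T y = l • y := by
    have hcomm : T (kadj J T x) = kadj J T (T x) := DFunLike.congr_fun hT x
    rw [hy, map_sub, map_smul, hcomm, hx, map_smul, smul_sub, smul_comm]
  have hJy : inner ℂ (J y) y = 0 :=
    calc inner ℂ (J y) y = inner ℂ (J x) (T y) - l * inner ℂ (J x) y := by
          rw [hy, map_sub, inner_sub_left, inner_kadj_apply hJ2, ← hy, map_smul, inner_smul_left,
            Complex.conj_conj]
      _ = 0 := by rw [hTy, inner_smul_right, sub_self]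
  exact sub_eq_zero.mp (eq_zero_of_mem_posType_of_inner_self_eq_zero hl hTy hJy)

theorem ker_eq_ker_of_twoSidedPosType (J N : H →L[ℂ] H)
    (hJ : ContinuousLinearMap.adjoint J = J) (hJ2 : J ∘L J = 1)
    (hN : N ∘L kadj J N = kadj J N ∘L N)
    (l : ℂ) (hl : l ∈ posType J N) (hl' : (starRingEnd ℂ) l ∈ posType J (kadj J N)) :
    ∀ x : H, N x = l • x ↔ kadj J N x = (starRingEnd ℂ) l • x := by
  have hNN := kadj_kadj hJ hJ2 N
  have hN' : kadj J N ∘L kadj J (kadj J N) = kadj J (kadj J N) ∘L kadj J N := by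
    rw [hNN, hN]
  intro x
  refine ⟨kadj_apply_eq_of_mem_posType hJ2 hN hl, fun hx => ?_⟩
  simpa [hNN] using kadj_apply_eq_of_mem_posType hJ2 hN' hl' hx
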